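/- The ℚ-linear maps α̃¹ and α̃² of W defined by α̃¹: Ẽ₁^(ℓ) ↦ Ẽ₄^(ℓ), Ẽ₂^(ℓ) ↦ −Ẽ₉^(ℓ), Ẽ₃^(ℓ) ↦ −Ẽ₁^(ℓ), Ẽ₄^(ℓ) ↦ −Ẽ₃^(ℓ), Ẽ₅^(ℓ) ↦ −Ẽ₈^(ℓ), Ẽ₆^(ℓ) ↦ −Ẽ₅^(ℓ), Ẽ₇^(ℓ) ↦ −Ẽ₂^(ℓ), Ẽ₈^(ℓ) ↦ Ẽ₆^(ℓ), Ẽ₉^(ℓ) ↦ Ẽ₇^(ℓ), Ẽ₁₀^(ℓ) ↦ Ẽ₁₀^(ℓ), Ẽ₁₁^(ℓ) ↦ Ẽ₁₁^(ℓ), Ẽ₁₂^(ℓ) ↦ Ẽ₁₂^(ℓ), and α̃²: Ẽ₁^(ℓ) ↦ Ẽ₉^(ℓ), Ẽ₂^(ℓ) ↦ Ẽ₅^(ℓ), Ẽ₃^(ℓ) ↦ Ẽ₂^(ℓ), Ẽ₄^(ℓ) ↦ Ẽ₇^(ℓ), Ẽ₅^(ℓ) ↦ Ẽ₃^(ℓ),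 Ẽ₆^(ℓ) ↦ Ẽ₄^(ℓ), Ẽ₇^(ℓ) ↦ Ẽ₆^(ℓ), Ẽ₈^(ℓ) ↦ Ẽ₁^(ℓ), Ẽ₉^(ℓ) ↦ Ẽ₈^(ℓ), Ẽ₁₀^(ℓ) ↦ Ẽ₁₀^(ℓ), Ẽ₁₁^(ℓ) ↦ Ẽ₁₁^(ℓ), Ẽ₁₂^(ℓ) ↦ Ẽ₁₂^(ℓ) (for ℓ = 1, 2) preserve the bilinear form and map the Niemeier lattice N onto itself; each has order 3, they commute, and the subgroup of the automorphism group of N they generate is isomorphic to ℤ/3 × ℤ/3. -/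

import Mathlib

/-!
Both maps are signed permutations of the twelve `A₂` blocks, so they are isometries and preserve
the root lattice `A₂¹²`. Such a map sends the glue vector `w_i` to `⅓ ∑ b_m Ẽ_m`, where `b` is a
signed permutation of the `i`-th row of the glue matrix, and this lies in `N` as soon as `b mod 3`
lies in the ternary code spanned by the rows. Order three and commutation are read off from the
block permutations and the signs. Finally, a vector fixed by `α̃²` but moved by `α̃¹` shows
`α̃¹ ∉ ⟨α̃²⟩`; as `⟨α̃¹⟩` has prime order, the two cyclic groups meet trivially, so the commuting
generators span `ℤ/3 × ℤ/3`.
-/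
noncomputable section

abbrev JN : Type := Fin 12 × Fin 2
abbrev WN : Type := JN → ℚ

/-- The simple roots `Ẽ_j^(k)` (with `k : Fin 2` corresponding to `k+1 ∈ {1,2}`). -/
def Et (j : Fin 12) (k : Fin 2) : WN := Pi.single (j, k) 1

/-- Gram coefficients of the (positive definite) bilinear form on `W`. -/
def GN : JN → JN → ℚ := fun i j =>
  if i.1 = j.1 then (if i.2 = j.2 then 2 else -1) else 0

/-- The symmetric bilinear form on `W`. -/
def BW (x y : WN) : ℚ := ∑ i : JN, ∑ j : JN, x i * GN i j * y j

/-- `Ẽ_j := Ẽ_j^(1) + 2·Ẽ_j^(2)`. -/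
def EtV (j : Fin 12) : WN := Et j 0 + 2 • Et j 1

/-- The rows of the generating matrix of the glue code. -/
def glueMat : Fin 6 → Fin 12 → ℚ :=
  ![![0, 1, 1, 1, 1, 1, 1, 0, 0, 0, 0, 0],
    ![-1, 0, 1, -1, -1, 1, 0, 1, 0, 0, 0, 0],
    ![-1, 1, 0, 1, -1, -1, 0, 0, 1, 0, 0, 0],
    ![-1, -1, 1, 0, 1, -1, 0, 0, 0, 1, 0, 0],
    ![-1, -1, -1, 1, 0, 1, 0, 0, 0, 0, 1, 0],
    ![-1, 1, -1, -1, 1, 0, 0, 0, 0, 0, 0, 1]]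

/-- The glue vectors `w_i := (1/3)·∑_j a_{ij}·Ẽ_j`. -/
def wvec (i : Fin 6) : WN := (3 : ℚ)⁻¹ • ∑ j : Fin 12, glueMat i j • EtV j

/-- The Niemeier lattice `N` of type `A₂¹²`. -/
def NL : Submodule ℤ WN :=
  Submodule.span ℤ ({x | ∃ j k, x = Et j k} ∪ Set.range wvec)

/-- Index table for `α̃¹` (0-indexed: block `j` of the root lattice is sent to block `idx1 j`). -/
def idx1 : Fin 12 → Fin 12 := ![3, 8, 0, 2, 7, 4, 1, 5, 6, 9, 10, 11]

/-- Sign table for `α̃¹`. -/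
def sgn1 : Fin 12 → ℚ := ![1, -1, -1, -1, -1, -1, -1, 1, 1, 1, 1, 1]

/-- Index table for `α̃²`. -/
def idx2 : Fin 12 → Fin 12 := ![8, 4, 1, 6, 2, 3, 5, 0, 7, 9, 10, 11]

open Finset Subgroup

section SignedBlockPerm

variable {R J K : Type*} [CommRing R]

def signedBlockPerm (σ : Equiv.Perm J) (s : J → ℤ) (hs : ∀ j, s j * s j = 1) :
    (J × K → R) ≃ₗ[R] (J × K → R) where
  toFun x p := s (σ.symm p.1) * x (σ.symm p.1, p.2)
  invFun x p := s p.1 * x (σ p.1, p.2)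
  map_add' x y := by funext p; simp [mul_add]
  map_smul' c x := by funext p; simp only [Pi.smul_apply, smul_eq_mul, RingHom.id_apply]; ring
  left_inv x := by funext p; simp [← mul_assoc, ← Int.cast_mul, hs]
  right_inv x := by funext p; simp [← mul_assoc, ← Int.cast_mul, hs]

variable {σ τ : Equiv.Perm J} {s t : J → ℤ} {hs : ∀ j, s j * s j = 1} {ht : ∀ j, t j * t j = 1}

@[simp]
lemma signedBlockPerm_apply (x : J × K → R) (p : J × K) :
    signedBlockPerm σ s hs x p = s (σ.symm p.1) * x (σ.symm p.1, p.2) := rfl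

lemma signedBlockPerm_single [DecidableEq J] [DecidableEq K] (j : J) (k : K) (a : R) :
    signedBlockPerm σ s hs (Pi.single (j, k) a) = Pi.single (σ j, k) (s j * a) := by
  funext ⟨i, l⟩
  rcases eq_or_ne i (σ j) with rfl | hi
  · simp [Pi.single_apply]
  · simp [hi, Equiv.symm_apply_eq]

lemma signedBlockPerm_pow_single [DecidableEq J] [DecidableEq K] (n : ℕ) (j : J) (k : K)
    (a : R) : (signedBlockPerm σ s hs ^ n) (Pi.single (j, k) a) =
      Pi.single ((σ ^ n) j, k) ((∏ i ∈ range n, s ((σ ^ i) j) : ℤ) * a) := by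
  induction n generalizing j a with
  | zero => simp
  | succ n ih =>
    rw [pow_succ, LinearEquiv.mul_apply, signedBlockPerm_single, ih, prod_range_succ']
    simp [pow_succ, mul_assoc]

lemma signedBlockPerm_pow_eq_one [Finite J] [Finite K] {n : ℕ} (hσ : σ ^ n = 1)
    (hsn : ∀ j, ∏ i ∈ range n, s ((σ ^ i) j) = 1) :
    (signedBlockPerm σ s hs : (J × K → R) ≃ₗ[R] _) ^ n = 1 := by
  classical
  refine LinearEquiv.toLinearMap_injective (LinearMap.pi_ext fun ⟨j, k⟩ a => ?_)
  simp [signedBlockPerm_pow_single, hσ, hsn]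

lemma signedBlockPerm_commute [Finite J] [Finite K] (hστ : Commute σ τ)
    (hst : ∀ j, s (τ j) * t j = t (σ j) * s j) :
    Commute (signedBlockPerm σ s hs : (J × K → R) ≃ₗ[R] _) (signedBlockPerm τ t ht) := by
  classical
  refine LinearEquiv.toLinearMap_injective (LinearMap.pi_ext fun ⟨j, k⟩ a => ?_)
  have hj : σ (τ j) = τ (σ j) := congrArg (· j) hστ.eq
  simp [signedBlockPerm_single, hj, ← mul_assoc, ← Int.cast_mul, hst]

lemma signedBlockPerm_ne_one [Nonempty K] [Nontrivial R] {j : J} (hj : σ j ≠ j) :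
    (signedBlockPerm σ s hs : (J × K → R) ≃ₗ[R] _) ≠ 1 := by
  classical
  intro h
  obtain ⟨k⟩ := ‹Nonempty K›
  have h' := LinearEquiv.congr_fun h (Pi.single (j, k) 1)
  rw [signedBlockPerm_single] at h'
  simpa [Pi.single_apply, Ne.symm hj] using congrFun h' (j, k)

lemma sum_signedBlockPerm_mul_mul [Fintype J] [DecidableEq J] [Fintype K] (g : K → K → R)
    (x y : J × K → R) :
    ∑ p, ∑ q, signedBlockPerm σ s hs x p * (if p.1 = q.1 then g p.2 q.2 else 0) *
        signedBlockPerm σ s hs y q =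
      ∑ p, ∑ q, x p * (if p.1 = q.1 then g p.2 q.2 else 0) * y q := by
  let e : J × K ≃ J × K := σ.prodCongr (Equiv.refl K)
  rw [← e.sum_comp]
  refine sum_congr rfl fun p _ => ?_
  rw [← e.sum_comp]
  refine sum_congr rfl fun q _ => ?_
  simp only [e, signedBlockPerm_apply, Equiv.prodCongr_apply, Prod.map, Equiv.symm_apply_apply,
    Equiv.refl_apply, σ.injective.eq_iff]
  split_ifs with h
  · have hsq : (s p.1 : R) * s q.1 = 1 := by rw [h, ← Int.cast_mul, hs, Int.cast_one]
    linear_combination x p * g p.2 q.2 * y q * hsq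
  · simp

end SignedBlockPerm

lemma image_eq_of_mapsTo_of_iterate_eq_id {α : Type*} {f : α → α} {S : Set α}
    (hf : Set.MapsTo f S S) {n : ℕ} (hn : n ≠ 0) (hfn : f^[n] = id) : f '' S = S := by
  refine hf.image_subset.antisymm fun x hx => ?_
  obtain ⟨m, rfl⟩ := Nat.exists_eq_succ_of_ne_zero hn
  exact ⟨f^[m] x, hf.iterate m hx, by rw [← Function.iterate_succ_apply' f m x, hfn, id]⟩

section PairOfCyclicGroups

variable {G : Type*} [Group G]

lemma disjoint_zpowers_of_notMem_zpowers {p : ℕ} [Fact p.Prime] {a b : G} (ha : orderOf a = p)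
    (hab : a ∉ zpowers b) : Disjoint (zpowers a) (zpowers b) := by
  rw [Subgroup.disjoint_def]
  intro x hxa hxb
  by_contra hx
  have : (⟨a, mem_zpowers a⟩ : zpowers a) ∈ zpowers (⟨x, hxa⟩ : zpowers a) :=
    mem_zpowers_of_prime_card (by rw [Nat.card_zpowers, ha]) (by simpa using hx)
  obtain ⟨k, hk⟩ := mem_zpowers_iff.mp this
  have hxk : x ^ k = a := by simpa using congrArg Subtype.val hk
  exact hab (hxk ▸ zpow_mem hxb k)

lemma nonempty_closure_pair_mulEquiv {a b : G} {m n : ℕ} (ha : orderOf a = m)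
    (hb : orderOf b = n) (hab : Commute a b) (hdisj : Disjoint (zpowers a) (zpowers b)) :
    Nonempty (closure {a, b} ≃* Multiplicative (ZMod m × ZMod n)) := by
  have generator (c : G) : ∀ x : zpowers c, x ∈ zpowers (⟨c, mem_zpowers c⟩ : zpowers c) := by
    rintro ⟨_, k, rfl⟩
    exact ⟨k, rfl⟩
  let eA := zmodMulEquivOfGenerator (generator a) ((Nat.card_zpowers a).trans ha)
  let eB := zmodMulEquivOfGenerator (generator b) ((Nat.card_zpowers b).trans hb)
  let f := (zpowers a).subtype.comp eA.toMonoidHom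
  let g := (zpowers b).subtype.comp eB.toMonoidHom
  have range_f : f.range = zpowers a := by
    refine le_antisymm (fun _ ⟨x, hx⟩ => hx ▸ (eA x).2) (zpowers_le.mpr ⟨.ofAdd 1, ?_⟩)
    simp [f, eA]
  have range_g : g.range = zpowers b := by
    refine le_antisymm (fun _ ⟨y, hy⟩ => hy ▸ (eB y).2) (zpowers_le.mpr ⟨.ofAdd 1, ?_⟩)
    simp [g, eB]
  have comm : ∀ x y, Commute (f x) (g y) := by
    intro x y
    obtain ⟨i, hi⟩ := mem_zpowers_iff.mp (eA x).2
    obtain ⟨j, hj⟩ := mem_zpowers_iff.mp (eB y).2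
    simp only [f, g, MonoidHom.coe_comp, Function.comp_apply, MulEquiv.coe_toMonoidHom,
      coe_subtype, ← hi, ← hj]
    exact hab.zpow_zpow i j
  let φ := f.noncommCoprod g comm
  have hφ : Function.Injective φ := (MonoidHom.noncommCoprod_injective f g comm).mpr
    ⟨Subtype.val_injective.comp eA.injective, Subtype.val_injective.comp eB.injective,
      range_f ▸ range_g ▸ hdisj⟩
  have range_φ : φ.range = closure {a, b} := by
    rw [MonoidHom.noncommCoprod_range, range_f, range_g, Set.insert_eq, Subgroup.closure_union,
      zpowers_eq_closure, zpowers_eq_closure]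
  exact ⟨(MulEquiv.subgroupCongr range_φ).symm.trans
    ((MonoidHom.ofInjective hφ).symm.trans (MulEquiv.prodMultiplicative _ _).symm)⟩

end PairOfCyclicGroups

section GlueCode

def glueInt (i : Fin 6) (j : Fin 12) : ℤ := (glueMat i j).num

lemma intCast_glueInt (i : Fin 6) (j : Fin 12) : (glueInt i j : ℚ) = glueMat i j := by
  revert i j
  decide

def glueCode : Submodule (ZMod 3) (Fin 12 → ZMod 3) :=
  Submodule.span (ZMod 3) (Set.range fun i j => (glueInt i j : ZMod 3))

-- The last six columns of `glueMat` form the identity matrix, so a codeword is the combination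
-- of the rows whose coefficients are its last six coordinates.
lemma mem_glueCode_of_eq_sum (b : Fin 12 → ZMod 3)
    (h : ∀ m, b m = ∑ k : Fin 6, b (Fin.natAdd 6 k) * glueInt k m) : b ∈ glueCode := by
  have hb : b = ∑ k : Fin 6, b (Fin.natAdd 6 k) • fun j => (glueInt k j : ZMod 3) := by
    funext m
    simp [h m]
  rw [hb]
  exact sum_mem fun k _ => Submodule.smul_mem _ _ (Submodule.subset_span ⟨k, rfl⟩)

lemma Et_mem_NL (j : Fin 12) (k : Fin 2) : Et j k ∈ NL :=
  Submodule.subset_span (Or.inl ⟨j, k, rfl⟩)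

lemma wvec_mem_NL (i : Fin 6) : wvec i ∈ NL :=
  Submodule.subset_span (Or.inr ⟨i, rfl⟩)

lemma EtV_mem_NL (j : Fin 12) : EtV j ∈ NL :=
  add_mem (Et_mem_NL j 0) (nsmul_mem (Et_mem_NL j 1) 2)

lemma inv_three_smul_sum_mem_NL (b : Fin 12 → ℤ) (hb : (fun m => (b m : ZMod 3)) ∈ glueCode) :
    (3 : ℚ)⁻¹ • ∑ m, (b m : ℚ) • EtV m ∈ NL := by
  obtain ⟨c, hc⟩ := (Submodule.mem_span_range_iff_exists_fun (ZMod 3)).mp hb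
  have hdvd (m : Fin 12) : ((3 : ℕ) : ℤ) ∣ b m - ∑ k, ((c k).val : ℤ) * glueInt k m := by
    have hm : (b m : ZMod 3) = ∑ k, c k * glueInt k m := by
      simpa [Finset.sum_apply] using (congrFun hc m).symm
    rw [← ZMod.intCast_zmod_eq_zero_iff_dvd]
    push_cast
    simp [hm]
  choose d hd using hdvd
  let Φ := Fintype.linearCombination ℚ EtV
  have key : (3 : ℚ)⁻¹ • ∑ m, (b m : ℚ) • EtV m
      = ∑ k, ((c k).val : ℤ) • wvec k + ∑ m, d m • EtV m := by
    have hΦ (v : Fin 12 → ℚ) : ∑ m, v m • EtV m = Φ v := rfl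
    have hd' : ∑ m, d m • EtV m = Φ (fun m => (d m : ℚ)) := by
      simp only [← hΦ, Int.cast_smul_eq_zsmul]
    simp only [wvec, hΦ, hd', ← map_smul, ← map_zsmul, ← map_sum, ← map_add]
    congr 1
    funext m
    have hm := congrArg (Int.cast : ℤ → ℚ) (hd m)
    push_cast at hm
    simp only [Pi.smul_apply, Pi.add_apply, Finset.sum_apply, smul_eq_mul, ← intCast_glueInt]
    simp only [zsmul_eq_mul, Int.cast_natCast, mul_left_comm _ (3⁻¹ : ℚ), ← mul_sum]
    linarith
  rw [key]
  exact add_mem (sum_mem fun k _ => zsmul_mem (wvec_mem_NL k) _)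
    (sum_mem fun m _ => zsmul_mem (EtV_mem_NL m) _)

end GlueCode

section SignedBlockPermOnW

variable {σ : Equiv.Perm (Fin 12)} {s : Fin 12 → ℤ} {hs : ∀ j, s j * s j = 1}

lemma BW_signedBlockPerm (x y : WN) :
    BW (signedBlockPerm σ s hs x) (signedBlockPerm σ s hs y) = BW x y :=
  sum_signedBlockPerm_mul_mul (fun k l => if k = l then 2 else -1) x y

lemma signedBlockPerm_Et (j : Fin 12) (k : Fin 2) :
    signedBlockPerm σ s hs (Et j k) = (s j : ℚ) • Et (σ j) k := by
  rw [Et, Et, signedBlockPerm_single, ← smul_eq_mul, Pi.single_smul']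

lemma signedBlockPerm_EtV (j : Fin 12) :
    signedBlockPerm σ s hs (EtV j) = (s j : ℚ) • EtV (σ j) := by
  rw [EtV, EtV, map_add, map_nsmul, signedBlockPerm_Et, signedBlockPerm_Et, smul_add, smul_comm]

lemma signedBlockPerm_wvec (i : Fin 6) : signedBlockPerm σ s hs (wvec i) =
    (3 : ℚ)⁻¹ • ∑ m, ((glueInt i (σ.symm m) * s (σ.symm m) : ℤ) : ℚ) • EtV m := by
  rw [wvec, map_smul, map_sum]
  conv_rhs => rw [← Equiv.sum_comp σ]
  congr 1
  refine sum_congr rfl fun j _ => ?_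
  rw [map_smul, signedBlockPerm_EtV, smul_smul, σ.symm_apply_apply, Int.cast_mul, intCast_glueInt]

lemma signedBlockPerm_mapsTo_NL
    (hglue : ∀ i, (fun m => ((glueInt i (σ.symm m) * s (σ.symm m) : ℤ) : ZMod 3)) ∈ glueCode) :
    Set.MapsTo (signedBlockPerm σ s hs : WN ≃ₗ[ℚ] WN) NL NL := by
  have : NL ≤ NL.comap ((signedBlockPerm σ s hs).toLinearMap.restrictScalars ℤ) := by
    refine Submodule.span_le.mpr ?_
    rintro _ (⟨j, k, rfl⟩ | ⟨i, rfl⟩)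
    · change signedBlockPerm σ s hs (Et j k) ∈ NL
      rw [signedBlockPerm_Et, Int.cast_smul_eq_zsmul]
      exact zsmul_mem (Et_mem_NL _ _) _
    · change signedBlockPerm σ s hs (wvec i) ∈ NL
      rw [signedBlockPerm_wvec]
      exact inv_three_smul_sum_mem_NL _ (hglue i)
  exact fun x hx => this hx

end SignedBlockPermOnW

lemma notMem_zpowers_of_apply_eq {R M : Type*} [Semiring R] [AddCommMonoid M] [Module R M]
    {e f : M ≃ₗ[R] M} {v : M} (hf : f v = v) (he : e v ≠ v) : e ∉ zpowers f :=
  fun h => he (zpowers_le.mpr (show f ∈ MulAction.stabilizer _ v from hf) h)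

def perm1 : Equiv.Perm (Fin 12) := ⟨idx1, fun j => idx1 (idx1 j), by decide, by decide⟩

def perm2 : Equiv.Perm (Fin 12) := ⟨idx2, fun j => idx2 (idx2 j), by decide, by decide⟩

def sgnInt (j : Fin 12) : ℤ := (sgn1 j).num

lemma intCast_sgnInt (j : Fin 12) : (sgnInt j : ℚ) = sgn1 j := by
  revert j
  decide

def α₁ : WN ≃ₗ[ℚ] WN := signedBlockPerm perm1 sgnInt (by decide)

def α₂ : WN ≃ₗ[ℚ] WN := signedBlockPerm perm2 (fun _ => 1) (fun _ => rfl)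

lemma α₁_Et (j : Fin 12) (k : Fin 2) : α₁ (Et j k) = sgn1 j • Et (idx1 j) k := by
  rw [α₁, signedBlockPerm_Et, intCast_sgnInt]
  rfl

lemma α₂_Et (j : Fin 12) (k : Fin 2) : α₂ (Et j k) = Et (idx2 j) k := by
  rw [α₂, signedBlockPerm_Et, Int.cast_one, one_smul]
  rfl

lemma α₁_pow_three : α₁ ^ 3 = 1 := signedBlockPerm_pow_eq_one (by decide) (by decide)

lemma α₂_pow_three : α₂ ^ 3 = 1 := signedBlockPerm_pow_eq_one (by decide) (by decide)

lemma orderOf_α₁ : orderOf α₁ = 3 :=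
  orderOf_eq_prime α₁_pow_three (signedBlockPerm_ne_one (j := 0) (by decide))

lemma orderOf_α₂ : orderOf α₂ = 3 :=
  orderOf_eq_prime α₂_pow_three (signedBlockPerm_ne_one (j := 0) (by decide))

lemma commute_α₁_α₂ : Commute α₁ α₂ :=
  signedBlockPerm_commute (show perm1 * perm2 = perm2 * perm1 by decide) (by decide)

lemma image_α₁_NL : (fun v => α₁ v) '' NL = NL :=
  image_eq_of_mapsTo_of_iterate_eq_id
    (signedBlockPerm_mapsTo_NL fun i => mem_glueCode_of_eq_sum _ (by revert i; decide))
    three_ne_zero (by rw [← LinearEquiv.coe_pow, α₁_pow_three]; rfl)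

lemma image_α₂_NL : (fun v => α₂ v) '' NL = NL :=
  image_eq_of_mapsTo_of_iterate_eq_id
    (signedBlockPerm_mapsTo_NL fun i => mem_glueCode_of_eq_sum _ (by revert i; decide))
    three_ne_zero (by rw [← LinearEquiv.coe_pow, α₂_pow_three]; rfl)

lemma α₁_notMem_zpowers_α₂ : α₁ ∉ zpowers α₂ := by
  -- `v` is the `α₂`-orbit sum of `Ẽ₁^(1)`.
  refine notMem_zpowers_of_apply_eq (v := Et 0 0 + Et 8 0 + Et 7 0) ?_ fun h => ?_
  · simp only [map_add, α₂_Et]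
    change Et 8 0 + Et 7 0 + Et 0 0 = _
    abel
  · rw [map_add, map_add, α₁_Et, α₁_Et, α₁_Et] at h
    simpa [Et, Pi.single_apply, idx1] using congrFun h (0, 0)

theorem statement13 :
    ∃ A1 A2 : WN ≃ₗ[ℚ] WN,
      -- defining values of α̃¹ and α̃² on the basis vectors Ẽ_j^(ℓ)
      (∀ (j : Fin 12) (k : Fin 2), A1 (Et j k) = sgn1 j • Et (idx1 j) k) ∧
      (∀ (j : Fin 12) (k : Fin 2), A2 (Et j k) = Et (idx2 j) k) ∧
      -- they preserve the bilinear form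
      (∀ x y : WN, BW (A1 x) (A1 y) = BW x y) ∧
      (∀ x y : WN, BW (A2 x) (A2 y) = BW x y) ∧
      -- they map N onto itself
      ((fun v => A1 v) '' NL = NL) ∧
      ((fun v => A2 v) '' NL = NL) ∧
      -- each has order 3 and they commute
      orderOf A1 = 3 ∧ orderOf A2 = 3 ∧ A1 * A2 = A2 * A1 ∧
      -- the subgroup of Aut(N) they generate is isomorphic to ℤ/3 × ℤ/3
      Nonempty ((Subgroup.closure {A1, A2} : Subgroup (WN ≃ₗ[ℚ] WN)) ≃*
        Multiplicative (ZMod 3 × ZMod 3)) :=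
  ⟨α₁, α₂, α₁_Et, α₂_Et, BW_signedBlockPerm, BW_signedBlockPerm, image_α₁_NL, image_α₂_NL,
    orderOf_α₁, orderOf_α₂, commute_α₁_α₂.eq,
    nonempty_closure_pair_mulEquiv orderOf_α₁ orderOf_α₂ commute_α₁_α₂
      (disjoint_zpowers_of_notMem_zpowers orderOf_α₁ α₁_notMem_zpowers_α₂)⟩

end
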